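/- arXiv:1305.5779 — 3 statements merged into one kernel-verified Lean document; each statement's English description precedes it below -/
import Mathlib

section
/- Fix L ≥ 1, M > 1, and positive constants c₂', c₂, c₃, T, β ∈ (0,1). Consider minimizing the complexity C(N₀,...,N_L) = c₃ T^{-1}(N₀ + ((M+1)/M) Σ_{l=1}^L N_l M^l) over positive reals N₀,...,N_L subject to the variance constraint c₂' N₀^{-1} + c₂ T^β Σ_{l=1}^L N_l^{-1} M^{-lβ} = V for a fixed V > 0. Then the minimizer is N₀ = √λ √(c₂' T / c₃) and N_l = √λ √(c₂/c₃) T^{(1+β)/2} √(M/(M+1)) M^{-l(1+β)/2} for 1 ≤ l ≤ L, where √λ = [√(c₂' c₃ T^{-β}) + √(c₂ c₃) √((M+1)/M) M^{(1-β)/2} (M^{L(1-β)/2} − 1)/(M^{(1-β)/2} − 1)] T^{-(1-β)/2} / V. -/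
/-!
Writing `aₗ` for the variance and `bₗ` for the cost contributed by one sample on level `l`, the
constraint reads `∑ aₗ / Nₗ = V` and the cost is `∑ bₗ Nₗ`. By Cauchy–Schwarz,
`(∑ √(aₗ bₗ))² ≤ (∑ aₗ / Nₗ) (∑ bₗ Nₗ)`, with equality exactly when `Nₗ` is proportional to
`√(aₗ / bₗ)`; the constraint fixes the factor to `√λ = (∑ √(aₗ bₗ)) / V`. For `l ≥ 1`,
`√(aₗ bₗ)` is proportional to `M ^ (l (1 - β) / 2)`, so `∑ √(aₗ bₗ)` is a geometric sum, which
gives the closed form of `√λ`.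
-/

open Finset

namespace Real

lemma mul_sqrt_div_eq_sqrt_mul (a : ℝ) {b : ℝ} (hb : 0 ≤ b) :
    b * √(a / b) = √(a * b) := by
  rcases hb.eq_or_lt with rfl | hb
  · simp
  · rw [sqrt_div' a hb.le, sqrt_mul' a hb.le, mul_div_assoc', div_eq_iff (sqrt_pos.2 hb).ne',
      mul_assoc, mul_self_sqrt hb.le, mul_comm]

lemma div_sqrt_div_eq_sqrt_mul {a : ℝ} (ha : 0 ≤ a) (b : ℝ) :
    a / √(a / b) = √(a * b) := by
  rcases ha.eq_or_lt with rfl | ha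
  · simp
  · rw [sqrt_div ha.le, sqrt_mul ha.le, div_div_eq_mul_div, div_eq_iff (sqrt_pos.2 ha).ne',
      mul_right_comm, mul_self_sqrt ha.le]

end Real

section LagrangeAllocation

variable {ι : Type*} (s : Finset ι) (a b : ι → ℝ) (V : ℝ)

noncomputable def lagrangeAllocation (i : ι) : ℝ :=
  (∑ j ∈ s, √(a j * b j)) / V * √(a i / b i)

variable {s a b V}

lemma sum_sqrt_mul_pos (hs : s.Nonempty) (ha : ∀ i ∈ s, 0 < a i)
    (hb : ∀ i ∈ s, 0 < b i) :
    0 < ∑ i ∈ s, √(a i * b i) :=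
  sum_pos (fun i hi ↦ Real.sqrt_pos.2 (mul_pos (ha i hi) (hb i hi))) hs

lemma lagrangeAllocation_pos (hs : s.Nonempty) (ha : ∀ i ∈ s, 0 < a i)
    (hb : ∀ i ∈ s, 0 < b i) (hV : 0 < V) {i : ι} (hi : i ∈ s) :
    0 < lagrangeAllocation s a b V i := by
  have hK := sum_sqrt_mul_pos hs ha hb
  have hai := ha i hi
  have hbi := hb i hi
  unfold lagrangeAllocation
  positivity

lemma sum_div_lagrangeAllocation (hs : s.Nonempty) (ha : ∀ i ∈ s, 0 < a i)
    (hb : ∀ i ∈ s, 0 < b i) :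
    ∑ i ∈ s, a i / lagrangeAllocation s a b V i = V := by
  have hK := sum_sqrt_mul_pos hs ha hb
  calc ∑ i ∈ s, a i / lagrangeAllocation s a b V i
      = ∑ i ∈ s, √(a i * b i) / ((∑ j ∈ s, √(a j * b j)) / V) := by
        refine sum_congr rfl fun i hi ↦ ?_
        rw [lagrangeAllocation, mul_comm, ← div_div, Real.div_sqrt_div_eq_sqrt_mul (ha i hi).le]
    _ = V := by rw [← sum_div, div_div_cancel₀ hK.ne']

lemma sum_mul_lagrangeAllocation (hb : ∀ i ∈ s, 0 < b i) :
    ∑ i ∈ s, b i * lagrangeAllocation s a b V i = (∑ i ∈ s, √(a i * b i)) ^ 2 / V := by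
  calc ∑ i ∈ s, b i * lagrangeAllocation s a b V i
      = (∑ j ∈ s, √(a j * b j)) / V * ∑ i ∈ s, √(a i * b i) := by
        rw [mul_sum]
        refine sum_congr rfl fun i hi ↦ ?_
        rw [lagrangeAllocation, mul_left_comm, Real.mul_sqrt_div_eq_sqrt_mul _ (hb i hi).le]
    _ = _ := by ring

lemma sq_sum_sqrt_mul_div_le (ha : ∀ i ∈ s, 0 < a i) (hb : ∀ i ∈ s, 0 < b i) {N : ι → ℝ}
    (hN : ∀ i ∈ s, 0 < N i) :
    (∑ i ∈ s, √(a i * b i)) ^ 2 / ∑ i ∈ s, a i / N i ≤ ∑ i ∈ s, b i * N i := by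
  refine (sq_sum_div_le_sum_sq_div s _ fun i hi ↦ div_pos (ha i hi) (hN i hi)).trans_eq ?_
  refine sum_congr rfl fun i hi ↦ ?_
  have hai := ha i hi
  have hNi := hN i hi
  rw [Real.sq_sqrt (mul_pos hai (hb i hi)).le]
  field_simp

theorem lagrangeAllocation_optimal (hs : s.Nonempty) (ha : ∀ i ∈ s, 0 < a i)
    (hb : ∀ i ∈ s, 0 < b i) (hV : 0 < V) {Nstar : ι → ℝ}
    (hNstar : ∀ i ∈ s, Nstar i = lagrangeAllocation s a b V i) :
    (∀ i ∈ s, 0 < Nstar i) ∧ ∑ i ∈ s, a i / Nstar i = V ∧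
      ∀ N : ι → ℝ, (∀ i ∈ s, 0 < N i) → ∑ i ∈ s, a i / N i = V →
        ∑ i ∈ s, b i * Nstar i ≤ ∑ i ∈ s, b i * N i := by
  have hsum (f : ι → ℝ → ℝ) :
      ∑ i ∈ s, f i (Nstar i) = ∑ i ∈ s, f i (lagrangeAllocation s a b V i) :=
    sum_congr rfl fun i hi ↦ by rw [hNstar i hi]
  refine ⟨fun i hi ↦ hNstar i hi ▸ lagrangeAllocation_pos hs ha hb hV hi, ?_, fun N hN hNV ↦ ?_⟩
  · rw [hsum fun i n ↦ a i / n, sum_div_lagrangeAllocation hs ha hb]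
  · rw [hsum fun i n ↦ b i * n, sum_mul_lagrangeAllocation hb, ← hNV]
    exact sq_sum_sqrt_mul_div_le ha hb hN

end LagrangeAllocation

lemma Finset.sum_Icc_zero_eq_add_sum_Icc_one {R : Type*} [AddCommMonoid R] (f : ℕ → R)
    (L : ℕ) :
    ∑ l ∈ Icc 0 L, f l = f 0 + ∑ l ∈ Icc 1 L, f l := by
  rw [← add_sum_Ioc_eq_sum_Icc L.zero_le, ← Icc_add_one_left_eq_Ioc, zero_add]

lemma sum_Icc_one_pow {K : Type*} [Field K] {x : K} (hx : x ≠ 1) (L : ℕ) :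
    ∑ l ∈ Icc 1 L, x ^ l = x * ((x ^ L - 1) / (x - 1)) := by
  rw [← Ico_add_one_right_eq_Icc, geom_sum_Ico hx (Nat.le_add_left 1 L)]
  ring

noncomputable def mlmcVarianceWeight (c₂' c₂ T β M : ℝ) (l : ℕ) : ℝ :=
  if l = 0 then c₂' else c₂ * T ^ β * M ^ (-(l : ℝ) * β)

noncomputable def mlmcCostWeight (c₃ T M : ℝ) (l : ℕ) : ℝ :=
  if l = 0 then c₃ * T⁻¹ else c₃ * T⁻¹ * ((M + 1) / M * M ^ (l : ℝ))

section MLMCWeights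

variable {c₂' c₂ c₃ T β M : ℝ}

lemma sum_mlmcVarianceWeight_div (L : ℕ) (N : ℕ → ℝ) :
    ∑ l ∈ Icc 0 L, mlmcVarianceWeight c₂' c₂ T β M l / N l =
      c₂' * (N 0)⁻¹ + c₂ * T ^ β * ∑ l ∈ Icc 1 L, (N l)⁻¹ * M ^ (-(l : ℝ) * β) := by
  rw [sum_Icc_zero_eq_add_sum_Icc_one, mul_sum, mlmcVarianceWeight, if_pos rfl,
    div_eq_mul_inv]
  congr 1
  refine sum_congr rfl fun l hl ↦ ?_
  rw [mlmcVarianceWeight, if_neg (Nat.pos_iff_ne_zero.1 (mem_Icc.1 hl).1)]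
  ring

lemma sum_mlmcCostWeight_mul (L : ℕ) (N : ℕ → ℝ) :
    ∑ l ∈ Icc 0 L, mlmcCostWeight c₃ T M l * N l =
      c₃ * T⁻¹ * (N 0 + (M + 1) / M * ∑ l ∈ Icc 1 L, N l * M ^ (l : ℝ)) := by
  rw [sum_Icc_zero_eq_add_sum_Icc_one, mul_add, mul_sum, mul_sum, mlmcCostWeight,
    if_pos rfl]
  congr 1
  refine sum_congr rfl fun l hl ↦ ?_
  rw [mlmcCostWeight, if_neg (Nat.pos_iff_ne_zero.1 (mem_Icc.1 hl).1)]
  ring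

lemma mlmcVarianceWeight_pos (hc₂' : 0 < c₂') (hc₂ : 0 < c₂) (hT : 0 < T) (hM : 0 < M)
    (l : ℕ) :
    0 < mlmcVarianceWeight c₂' c₂ T β M l := by
  unfold mlmcVarianceWeight; split <;> positivity

lemma mlmcCostWeight_pos (hc₃ : 0 < c₃) (hT : 0 < T) (hM : 0 < M) (l : ℕ) :
    0 < mlmcCostWeight c₃ T M l := by
  unfold mlmcCostWeight; split <;> positivity

lemma sqrt_mlmcVarianceWeight_div_mlmcCostWeight_zero :
    √(mlmcVarianceWeight c₂' c₂ T β M 0 / mlmcCostWeight c₃ T M 0) = √(c₂' * T / c₃) := by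
  rw [mlmcVarianceWeight, mlmcCostWeight, if_pos rfl, if_pos rfl, div_mul_eq_div_div,
    div_inv_eq_mul, div_mul_eq_mul_div]

lemma sqrt_mlmcVarianceWeight_div_mlmcCostWeight (hc₂ : 0 < c₂) (hc₃ : 0 < c₃) (hT : 0 < T)
    (hM : 0 < M) {l : ℕ} (hl : l ≠ 0) :
    √(mlmcVarianceWeight c₂' c₂ T β M l / mlmcCostWeight c₃ T M l) =
      √(c₂ / c₃) * T ^ ((1 + β) / 2) * √(M / (M + 1)) * M ^ (-(l : ℝ) * (1 + β) / 2) := by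
  rw [mlmcVarianceWeight, mlmcCostWeight, if_neg hl, if_neg hl,
    Real.sqrt_eq_iff_eq_sq (by positivity) (by positivity), mul_pow, mul_pow, mul_pow,
    Real.sq_sqrt (by positivity), Real.sq_sqrt (by positivity), ← Real.rpow_mul_natCast hT.le,
    ← Real.rpow_mul_natCast hM.le]
  have hT2 : T ^ ((1 + β) / 2 * (2 : ℕ)) = T ^ β * T := by
    rw [← Real.rpow_add_one hT.ne']; ring_nf
  have hM2 :
      M ^ (-(l : ℝ) * (1 + β) / 2 * (2 : ℕ)) = M ^ (-(l : ℝ) * β) / M ^ (l : ℝ) := by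
    rw [← Real.rpow_sub hM]; ring_nf
  rw [hT2, hM2]
  field_simp

lemma sqrt_mlmcVarianceWeight_mul_mlmcCostWeight_zero (hT : 0 < T) :
    √(mlmcVarianceWeight c₂' c₂ T β M 0 * mlmcCostWeight c₃ T M 0) =
      √(c₂' * c₃ * T ^ (-β)) * T ^ (-(1 - β) / 2) := by
  have hT2 : T ^ (-β) * T ^ (-(1 - β) / 2 * (2 : ℕ)) = T⁻¹ := by
    rw [← Real.rpow_add hT, ← Real.rpow_neg_one]; ring_nf
  rw [mlmcVarianceWeight, mlmcCostWeight, if_pos rfl, if_pos rfl,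
    ← Real.sqrt_sq (by positivity : 0 ≤ T ^ (-(1 - β) / 2)), ← Real.sqrt_mul' _ (by positivity),
    ← Real.rpow_mul_natCast hT.le, mul_assoc, hT2, mul_assoc]

lemma sqrt_mlmcVarianceWeight_mul_mlmcCostWeight (hc₂ : 0 < c₂) (hc₃ : 0 < c₃) (hT : 0 < T)
    (hM : 0 < M) {l : ℕ} (hl : l ≠ 0) :
    √(mlmcVarianceWeight c₂' c₂ T β M l * mlmcCostWeight c₃ T M l) =
      √(c₂ * c₃) * √((M + 1) / M) * T ^ (-(1 - β) / 2) * (M ^ ((1 - β) / 2)) ^ l := by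
  rw [mlmcVarianceWeight, mlmcCostWeight, if_neg hl, if_neg hl,
    Real.sqrt_eq_iff_eq_sq (by positivity) (by positivity), mul_pow, mul_pow, mul_pow,
    Real.sq_sqrt (by positivity), Real.sq_sqrt (by positivity), ← Real.rpow_mul_natCast hT.le,
    ← pow_mul, ← Real.rpow_mul_natCast hM.le]
  have hT2 : T ^ (-(1 - β) / 2 * (2 : ℕ)) = T ^ β / T := by
    rw [← Real.rpow_sub_one hT.ne']; ring_nf
  have hM2 : M ^ ((1 - β) / 2 * (l * 2 : ℕ)) = M ^ (-(l : ℝ) * β) * M ^ (l : ℝ) := by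
    rw [← Real.rpow_add hM]; push_cast; ring_nf
  rw [hT2, hM2]
  field_simp

lemma sum_sqrt_mlmcVarianceWeight_mul_mlmcCostWeight (hc₂ : 0 < c₂) (hc₃ : 0 < c₃)
    (hT : 0 < T) (hM : 1 < M) (hβ : β < 1) (L : ℕ) :
    ∑ l ∈ Icc 0 L, √(mlmcVarianceWeight c₂' c₂ T β M l * mlmcCostWeight c₃ T M l) =
      (√(c₂' * c₃ * T ^ (-β)) +
          √(c₂ * c₃) * √((M + 1) / M) * M ^ ((1 - β) / 2) *
            ((M ^ ((L : ℝ) * (1 - β) / 2) - 1) / (M ^ ((1 - β) / 2) - 1))) *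
        T ^ (-(1 - β) / 2) := by
  have hx : M ^ ((1 - β) / 2) ≠ 1 := (Real.one_lt_rpow hM (by linarith)).ne'
  rw [sum_Icc_zero_eq_add_sum_Icc_one, sqrt_mlmcVarianceWeight_mul_mlmcCostWeight_zero hT,
    sum_congr rfl fun l hl ↦ sqrt_mlmcVarianceWeight_mul_mlmcCostWeight hc₂ hc₃ hT
      (by linarith) (Nat.pos_iff_ne_zero.1 (mem_Icc.1 hl).1),
    ← mul_sum, sum_Icc_one_pow hx, show (L : ℝ) * (1 - β) / 2 = (1 - β) / 2 * L by ring,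
    Real.rpow_mul_natCast (by linarith)]
  ring

end MLMCWeights

theorem mlmc_optimal_sample_sizes_general
    (L : ℕ) (M c₂' c₂ c₃ T β V : ℝ)
    (hM : 1 < M) (hc₂' : 0 < c₂') (hc₂ : 0 < c₂) (hc₃ : 0 < c₃) (hT : 0 < T)
    (hβ1 : β < 1) (hV : 0 < V) :
    ∃ sqrtlam : ℝ,
      sqrtlam = (Real.sqrt (c₂' * c₃ * T ^ (-β)) +
          Real.sqrt (c₂ * c₃) * Real.sqrt ((M + 1) / M) * M ^ ((1 - β) / 2) *
            ((M ^ ((L : ℝ) * (1 - β) / 2) - 1) / (M ^ ((1 - β) / 2) - 1))) *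
          T ^ (-(1 - β) / 2) / V ∧
      ∀ Nstar : ℕ → ℝ,
        Nstar 0 = sqrtlam * Real.sqrt (c₂' * T / c₃) →
        (∀ l, 1 ≤ l → l ≤ L →
          Nstar l = sqrtlam * Real.sqrt (c₂ / c₃) * T ^ ((1 + β) / 2) *
            Real.sqrt (M / (M + 1)) * M ^ (-(l : ℝ) * (1 + β) / 2)) →
        ((∀ l, l ≤ L → 0 < Nstar l) ∧
        c₂' * (Nstar 0)⁻¹ +
            c₂ * T ^ β * ∑ l ∈ Icc 1 L, (Nstar l)⁻¹ * M ^ (-(l : ℝ) * β) = V ∧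
        ∀ N : ℕ → ℝ, (∀ l, l ≤ L → 0 < N l) →
          c₂' * (N 0)⁻¹ +
              c₂ * T ^ β * ∑ l ∈ Icc 1 L, (N l)⁻¹ * M ^ (-(l : ℝ) * β) = V →
          c₃ * T⁻¹ * (Nstar 0 + (M + 1) / M * ∑ l ∈ Icc 1 L, Nstar l * M ^ (l : ℝ)) ≤
            c₃ * T⁻¹ * (N 0 + (M + 1) / M * ∑ l ∈ Icc 1 L, N l * M ^ (l : ℝ))) := by
  have hM0 : 0 < M := by linarith
  have ha := mlmcVarianceWeight_pos (β := β) hc₂' hc₂ hT hM0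
  have hb := mlmcCostWeight_pos hc₃ hT hM0
  refine ⟨_, rfl, fun Nstar hNstar0 hNstar ↦ ?_⟩
  have hlagrange : ∀ l ∈ Icc 0 L, Nstar l = lagrangeAllocation (Icc 0 L)
      (mlmcVarianceWeight c₂' c₂ T β M) (mlmcCostWeight c₃ T M) V l := by
    intro l hl
    rw [lagrangeAllocation, sum_sqrt_mlmcVarianceWeight_mul_mlmcCostWeight hc₂ hc₃ hT hM hβ1]
    rcases Nat.eq_zero_or_pos l with rfl | hl0
    · rw [hNstar0, sqrt_mlmcVarianceWeight_div_mlmcCostWeight_zero]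
    · rw [hNstar l hl0 (mem_Icc.1 hl).2,
        sqrt_mlmcVarianceWeight_div_mlmcCostWeight hc₂ hc₃ hT hM0 hl0.ne']
      ring
  obtain ⟨hpos, hvar, hmin⟩ := lagrangeAllocation_optimal (nonempty_Icc.2 L.zero_le)
    (fun l _ ↦ ha l) (fun l _ ↦ hb l) hV hlagrange
  refine ⟨fun l hl ↦ hpos l (mem_Icc.2 ⟨l.zero_le, hl⟩), ?_, fun N hN hNV ↦ ?_⟩
  · rwa [← sum_mlmcVarianceWeight_div]
  · rw [← sum_mlmcCostWeight_mul, ← sum_mlmcCostWeight_mul]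
    exact hmin N (fun l hl ↦ hN l (mem_Icc.1 hl).2) (by rwa [sum_mlmcVarianceWeight_div])

/-- Lagrange optimization of the multilevel Monte Carlo sample sizes: the stated
`N₀, ..., N_L` are positive, satisfy the variance constraint with equality, and
minimize the complexity among all positive sample sizes satisfying the constraint. -/
theorem mlmc_optimal_sample_sizes
    (L : ℕ) (hL : 1 ≤ L) (M c₂' c₂ c₃ T β V : ℝ)
    (hM : 1 < M) (hc₂' : 0 < c₂') (hc₂ : 0 < c₂) (hc₃ : 0 < c₃) (hT : 0 < T)
    (hβ0 : 0 < β) (hβ1 : β < 1) (hV : 0 < V) :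
    ∃ sqrtlam : ℝ,
      sqrtlam = (Real.sqrt (c₂' * c₃ * T ^ (-β)) +
          Real.sqrt (c₂ * c₃) * Real.sqrt ((M + 1) / M) * M ^ ((1 - β) / 2) *
            ((M ^ ((L : ℝ) * (1 - β) / 2) - 1) / (M ^ ((1 - β) / 2) - 1))) *
          T ^ (-(1 - β) / 2) / V ∧
      ∀ Nstar : ℕ → ℝ,
        Nstar 0 = sqrtlam * Real.sqrt (c₂' * T / c₃) →
        (∀ l, 1 ≤ l → l ≤ L →
          Nstar l = sqrtlam * Real.sqrt (c₂ / c₃) * T ^ ((1 + β) / 2) *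
            Real.sqrt (M / (M + 1)) * M ^ (-(l : ℝ) * (1 + β) / 2)) →
        ((∀ l, l ≤ L → 0 < Nstar l) ∧
        c₂' * (Nstar 0)⁻¹ +
            c₂ * T ^ β * ∑ l ∈ Icc 1 L, (Nstar l)⁻¹ * M ^ (-(l : ℝ) * β) = V ∧
        ∀ N : ℕ → ℝ, (∀ l, l ≤ L → 0 < N l) →
          c₂' * (N 0)⁻¹ +
              c₂ * T ^ β * ∑ l ∈ Icc 1 L, (N l)⁻¹ * M ^ (-(l : ℝ) * β) = V →
          c₃ * T⁻¹ * (Nstar 0 + (M + 1) / M * ∑ l ∈ Icc 1 L, Nstar l * M ^ (l : ℝ)) ≤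
            c₃ * T⁻¹ * (N 0 + (M + 1) / M * ∑ l ∈ Icc 1 L, N l * M ^ (l : ℝ))) :=
  mlmc_optimal_sample_sizes_general L M c₂' c₂ c₃ T β V hM hc₂' hc₂ hc₃ hT hβ1 hV
end

section
/- Let p ≥ 1, let x : [0,T] → E be a continuous path into a metric space of finite p-variation, and let x^h be the piecewise geodesic/linear approximation of x over the uniform grid with mesh h (in the case E = ℝᵈ, piecewise linear interpolation at grid points). Then ‖x^h‖_{p-var;[0,T]} ≤ 3^{1−1/p} ‖x‖_{p-var;[0,T]} and ‖x^h‖_{1/p-Höl;[0,T]} ≤ 3^{1−1/p} ‖x‖_{1/p-Höl;[0,T]}. -/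
/-!
On each grid cell `x^h` is affine, so an increment of `x^h` inside a cell is a fraction `c ≤ 1`
of the cell increment of `x`, and the norms of consecutive increments inside one cell add up.
An increment of `x^h` across grid points splits into a partial cell, a stretch between grid
points (where `x^h = x`) and another partial cell, and the constant `3^{1-1/p}` comes from
`(a + b + c)^p ≤ 3^{p-1} (a^p + b^p + c^p)` and its concave counterpart for the exponent
`1/p`.

For the Hölder seminorm this suffices, because `c h^{1/p} ≤ (c h)^{1/p}`. For the
`p`-variation the increments of a dissection are charged to the potential
`Φ(t) = ‖x‖^p_{p-var;[0,G(t)]} + ‖x^h_t - x^h_{G(t)}‖^p`, where `G(t)` is the grid point left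
of `t`: superadditivity of `a ↦ a^p` and of `‖x‖^p_{p-var;[0,·]}` give
`‖x^h_t - x^h_s‖^p ≤ 3^{p-1} (Φ(t) - Φ(s))`, and the sum telescopes to
`3^{p-1} ‖x‖^p_{p-var;[0,T]}`.
-/

open Finset

/-- The `p`-variation seminorm of `x` on `[s,t]`. -/
noncomputable def pVarNorm (p s t : ℝ) {d : ℕ} (x : ℝ → EuclideanSpace ℝ (Fin d)) : ℝ :=
  sSup {r | ∃ n : ℕ, ∃ u : ℕ → ℝ, u 0 = s ∧ u n = t ∧ (∀ i < n, u i ≤ u (i + 1)) ∧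
    r = (∑ i ∈ range n, ‖x (u (i + 1)) - x (u i)‖ ^ p) ^ (1 / p)}

/-- The `1/p`-Hölder seminorm of `x` on `[s,t]`. -/
noncomputable def holNorm (p s t : ℝ) {d : ℕ} (x : ℝ → EuclideanSpace ℝ (Fin d)) : ℝ :=
  sSup {r | ∃ u v : ℝ, s ≤ u ∧ u < v ∧ v ≤ t ∧ r = ‖x v - x u‖ / (v - u) ^ (1 / p)}

/-- Piecewise linear interpolation of `x` over the uniform grid of mesh `h`. -/
noncomputable def pwLinear (h : ℝ) {d : ℕ} (x : ℝ → EuclideanSpace ℝ (Fin d)) :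
    ℝ → EuclideanSpace ℝ (Fin d) := fun t =>
  x (h * (⌊t / h⌋ : ℝ)) +
    ((t - h * (⌊t / h⌋ : ℝ)) / h) • (x (h * (⌊t / h⌋ : ℝ) + h) - x (h * (⌊t / h⌋ : ℝ)))

theorem sum_rpow_le_card_rpow_mul_rpow_sum {ι : Type*} (s : Finset ι) {f : ι → ℝ} {q : ℝ}
    (hf : ∀ i ∈ s, 0 ≤ f i) (hq₀ : 0 ≤ q) (hq₁ : q ≤ 1) :
    ∑ i ∈ s, f i ^ q ≤ (#s : ℝ) ^ (1 - q) * (∑ i ∈ s, f i) ^ q := by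
  rcases s.eq_empty_or_nonempty with rfl | hs
  · simp only [sum_empty, card_empty, Nat.cast_zero]
    positivity
  have hn : (0 : ℝ) < #s := by exact_mod_cast hs.card_pos
  have jensen := (Real.concaveOn_rpow hq₀ hq₁).le_map_sum (t := s) (w := fun _ => (#s : ℝ)⁻¹)
    (fun _ _ => by positivity) (by simp [hn.ne']) hf
  simp only [smul_eq_mul, ← mul_sum] at jensen
  rw [Real.mul_rpow (by positivity) (sum_nonneg hf), Real.inv_rpow hn.le,
    inv_mul_le_iff₀ hn] at jensen
  rw [Real.rpow_sub hn, Real.rpow_one]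
  calc ∑ i ∈ s, f i ^ q ≤ #s * (((#s : ℝ) ^ q)⁻¹ * (∑ i ∈ s, f i) ^ q) := jensen
    _ = _ := by field_simp

theorem add_add_rpow_le {a b c p : ℝ} (ha : 0 ≤ a) (hb : 0 ≤ b) (hc : 0 ≤ c) (hp : 1 ≤ p) :
    (a + b + c) ^ p ≤ 3 ^ (p - 1) * (a ^ p + b ^ p + c ^ p) := by
  have h := Real.rpow_sum_le_const_mul_sum_rpow_of_nonneg (s := univ) (f := ![a, b, c]) hp
    (by simp [Fin.forall_fin_succ, ha, hb, hc])
  simpa [Fin.sum_univ_three, add_assoc] using h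

theorem rpow_add_rpow_add_rpow_le {a b c q : ℝ} (ha : 0 ≤ a) (hb : 0 ≤ b) (hc : 0 ≤ c)
    (hq₀ : 0 ≤ q) (hq₁ : q ≤ 1) :
    a ^ q + b ^ q + c ^ q ≤ 3 ^ (1 - q) * (a + b + c) ^ q := by
  have h := sum_rpow_le_card_rpow_mul_rpow_sum univ (f := ![a, b, c])
    (by simp [Fin.forall_fin_succ, ha, hb, hc]) hq₀ hq₁
  simpa [Fin.sum_univ_three, add_assoc] using h

theorem norm_sub_le_norm_sub_add_norm_sub_add_norm_sub {E : Type*} [SeminormedAddCommGroup E]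
    (a b c d : E) : ‖a - d‖ ≤ ‖a - b‖ + ‖b - c‖ + ‖c - d‖ := by
  linarith [norm_sub_le_norm_sub_add_norm_sub a b d, norm_sub_le_norm_sub_add_norm_sub b c d]

section Dissection

variable {E : Type*} [SeminormedAddCommGroup E] {p a b c : ℝ} {x : ℝ → E}

def variationSums (p a b : ℝ) (x : ℝ → E) : Set ℝ :=
  {S | ∃ n : ℕ, ∃ u : ℕ → ℝ, u 0 = a ∧ u n = b ∧ (∀ i < n, u i ≤ u (i + 1)) ∧
    S = ∑ i ∈ range n, ‖x (u (i + 1)) - x (u i)‖ ^ p}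

-- `‖x‖^p_{p-var;[a,b]}`; like every `sSup` it is `0` when the sums are unbounded.
noncomputable def pVarPow (p a b : ℝ) (x : ℝ → E) : ℝ := sSup (variationSums p a b x)

theorem zero_mem_variationSums_self : (0 : ℝ) ∈ variationSums p a a x :=
  ⟨0, fun _ => a, rfl, rfl, by simp, by simp⟩

theorem add_mem_variationSums {S : ℝ} (hS : S ∈ variationSums p a b x) (hbc : b ≤ c) :
    S + ‖x c - x b‖ ^ p ∈ variationSums p a c x := by
  obtain ⟨n, u, hu0, hun, hmono, rfl⟩ := hS
  have hlt : ∀ i < n + 1, Function.update u (n + 1) c i = u i := fun i hi =>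
    Function.update_of_ne (by omega) _ _
  refine ⟨n + 1, Function.update u (n + 1) c, by rw [hlt 0 (by omega), hu0], by simp, ?_, ?_⟩
  · intro i hi
    rcases Nat.lt_succ_iff_lt_or_eq.mp hi with hi | rfl
    · rw [hlt i (by omega), hlt (i + 1) (by omega)]
      exact hmono i hi
    · simpa [hlt i (by omega), hun] using hbc
  · rw [sum_range_succ, Function.update_self, hlt n (by omega), hun]
    congr 1
    refine sum_congr rfl fun i hi => ?_
    rw [mem_range] at hi
    rw [hlt i (by omega), hlt (i + 1) (by omega)]

theorem variationSums_nonempty (hab : a ≤ b) : (variationSums p a b x).Nonempty :=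
  ⟨_, add_mem_variationSums zero_mem_variationSums_self hab⟩

theorem nonneg_of_mem_variationSums {S : ℝ} (hS : S ∈ variationSums p a b x) : 0 ≤ S := by
  obtain ⟨n, u, -, -, -, rfl⟩ := hS
  exact sum_nonneg fun i _ => by positivity

theorem pVarPow_nonneg : 0 ≤ pVarPow p a b x :=
  Real.sSup_nonneg fun _ => nonneg_of_mem_variationSums

theorem BddAbove.variationSums_of_le (h : BddAbove (variationSums p a c x)) (hbc : b ≤ c) :
    BddAbove (variationSums p a b x) := by
  obtain ⟨M, hM⟩ := h
  refine ⟨M, fun S hS => ?_⟩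
  have := hM (add_mem_variationSums hS hbc)
  linarith [Real.rpow_nonneg (norm_nonneg (x c - x b)) p]

theorem pVarPow_add_rpow_le (hab : a ≤ b) (hbc : b ≤ c)
    (h : BddAbove (variationSums p a c x)) :
    pVarPow p a b x + ‖x c - x b‖ ^ p ≤ pVarPow p a c x := by
  rw [← le_sub_iff_add_le]
  refine csSup_le (variationSums_nonempty hab) fun S hS => ?_
  rw [le_sub_iff_add_le]
  exact le_csSup h (add_mem_variationSums hS hbc)

theorem monotoneOn_Iic_of_le_succ {u : ℕ → ℝ} {n : ℕ} (hmono : ∀ i < n, u i ≤ u (i + 1)) :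
    MonotoneOn u (Set.Iic n) :=
  monotoneOn_of_le_add_one Set.ordConnected_Iic fun i _ _ hi => hmono i hi

end Dissection

section Seminorms

variable {p s t : ℝ} {d : ℕ} {x : ℝ → EuclideanSpace ℝ (Fin d)}

theorem le_pVarNorm_rpow_of_mem_variationSums (hp : 0 < p)
    (hbdd : BddAbove {r | ∃ n : ℕ, ∃ u : ℕ → ℝ, u 0 = s ∧ u n = t ∧
      (∀ i < n, u i ≤ u (i + 1)) ∧
      r = (∑ i ∈ range n, ‖x (u (i + 1)) - x (u i)‖ ^ p) ^ (1 / p)})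
    {S : ℝ} (hS : S ∈ variationSums p s t x) : S ≤ pVarNorm p s t x ^ p := by
  have hS₀ := nonneg_of_mem_variationSums hS
  obtain ⟨n, u, hu0, hun, hmono, rfl⟩ := hS
  calc _ = ((∑ i ∈ range n, ‖x (u (i + 1)) - x (u i)‖ ^ p) ^ (1 / p)) ^ p := by
        rw [one_div, Real.rpow_inv_rpow hS₀ hp.ne']
    _ ≤ pVarNorm p s t x ^ p := by
        gcongr
        exact le_csSup hbdd ⟨n, u, hu0, hun, hmono, rfl⟩

theorem pVarNorm_le_of_forall_variationSums_le {C : ℝ} (hp : 0 < p) (hC : 0 ≤ C)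
    (h : ∀ S ∈ variationSums p s t x, S ≤ C ^ p) : pVarNorm p s t x ≤ C := by
  refine Real.sSup_le ?_ hC
  rintro _ ⟨n, u, hu0, hun, hmono, rfl⟩
  have hS : _ ∈ variationSums p s t x := ⟨n, u, hu0, hun, hmono, rfl⟩
  calc _ ≤ (C ^ p) ^ (1 / p) := by
        gcongr
        exact h _ hS
    _ = C := by rw [one_div, Real.rpow_rpow_inv hC hp.ne']

theorem pVarNorm_nonneg : 0 ≤ pVarNorm p s t x := by
  refine Real.sSup_nonneg ?_
  rintro _ ⟨n, u, -, -, -, rfl⟩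
  positivity

theorem norm_sub_le_holNorm_mul (hp : p ≠ 0)
    (hbdd : BddAbove {r | ∃ u v : ℝ, s ≤ u ∧ u < v ∧ v ≤ t ∧
      r = ‖x v - x u‖ / (v - u) ^ (1 / p)})
    {a b : ℝ} (hsa : s ≤ a) (hab : a ≤ b) (hbt : b ≤ t) :
    ‖x b - x a‖ ≤ holNorm p s t x * (b - a) ^ (1 / p) := by
  rcases hab.eq_or_lt with rfl | hab
  · simp [Real.zero_rpow (inv_ne_zero hp)]
  rw [← div_le_iff₀ (by have := sub_pos.mpr hab; positivity)]
  exact le_csSup hbdd ⟨a, b, hsa, hab, hbt, rfl⟩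

theorem holNorm_le_of_forall_le {C : ℝ} (hC : 0 ≤ C)
    (h : ∀ a b, s ≤ a → a < b → b ≤ t → ‖x b - x a‖ ≤ C * (b - a) ^ (1 / p)) :
    holNorm p s t x ≤ C := by
  refine Real.sSup_le ?_ hC
  rintro _ ⟨a, b, hsa, hab, hbt, rfl⟩
  rw [div_le_iff₀ (by have := sub_pos.mpr hab; positivity)]
  exact h a b hsa hab hbt

theorem holNorm_nonneg : 0 ≤ holNorm p s t x := by
  refine Real.sSup_nonneg ?_
  rintro _ ⟨a, b, -, hab, -, rfl⟩
  have := sub_pos.mpr hab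
  positivity

end Seminorms

section Cell

variable {d : ℕ} {h : ℝ} (x : ℝ → EuclideanSpace ℝ (Fin d))

theorem mul_floor_le_and_lt_add (hh : 0 < h) (t : ℝ) :
    h * ⌊t / h⌋ ≤ t ∧ t < h * ⌊t / h⌋ + h := by
  constructor
  · calc h * ⌊t / h⌋ ≤ h * (t / h) := by gcongr; exact Int.floor_le _
      _ = t := by field_simp
  · calc t = h * (t / h) := by field_simp
      _ < h * (⌊t / h⌋ + 1) := by gcongr; exact Int.lt_floor_add_one _
      _ = h * ⌊t / h⌋ + h := by ring

theorem mul_floor_div_nonneg (hh : 0 < h) {t : ℝ} (ht : 0 ≤ t) : 0 ≤ h * ⌊t / h⌋ :=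
  mul_nonneg hh.le (by exact_mod_cast Int.floor_nonneg.mpr (div_nonneg ht hh.le))

theorem mul_intCast_add_le_of_lt (hh : 0 < h) {k m : ℤ} (hkm : h * k < h * m) :
    h * k + h ≤ h * m := by
  have : (k : ℝ) + 1 ≤ m := by exact_mod_cast (Int.cast_lt.mp (lt_of_mul_lt_mul_left hkm hh.le))
  nlinarith

theorem pwLinear_eq_of_mem_cell (hh : 0 < h) {k : ℤ} {t : ℝ} (hkt : h * k ≤ t)
    (htk : t ≤ h * k + h) :
    pwLinear h x t = x (h * k) + ((t - h * k) / h) • (x (h * k + h) - x (h * k)) := by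
  rcases htk.lt_or_eq with htk | rfl
  · have hfloor : ⌊t / h⌋ = k := by
      rw [Int.floor_eq_iff, le_div_iff₀ hh, div_lt_iff₀ hh]
      constructor <;> linarith
    simp only [pwLinear, hfloor]
  -- at the right end `pwLinear` reads the next cell, where the value is the same
  · have hfloor : ⌊(h * k + h) / h⌋ = k + 1 := by
      rw [show (h * k + h) / h = ((k + 1 : ℤ) : ℝ) by push_cast; field_simp]
      exact Int.floor_intCast _
    simp only [pwLinear, hfloor, Int.cast_add, Int.cast_one, mul_add, mul_one, sub_self,
      zero_div, zero_smul, add_zero, add_sub_cancel_left, div_self hh.ne', one_smul,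
      add_sub_cancel]

theorem pwLinear_mul_intCast (hh : 0 < h) (k : ℤ) : pwLinear h x (h * k) = x (h * k) := by
  simp [pwLinear_eq_of_mem_cell x hh le_rfl (le_add_of_nonneg_right hh.le)]

theorem pwLinear_mul_intCast_add (hh : 0 < h) (k : ℤ) :
    pwLinear h x (h * k + h) = x (h * k + h) := by
  simp [pwLinear_eq_of_mem_cell x hh (le_add_of_nonneg_right hh.le) le_rfl, hh.ne']

theorem norm_pwLinear_sub_of_mem_cell (hh : 0 < h) {k : ℤ} {a b : ℝ} (hka : h * k ≤ a)
    (hab : a ≤ b) (hbk : b ≤ h * k + h) :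
    ‖pwLinear h x b - pwLinear h x a‖ = (b - a) / h * ‖x (h * k + h) - x (h * k)‖ := by
  rw [pwLinear_eq_of_mem_cell x hh (hka.trans hab) hbk,
    pwLinear_eq_of_mem_cell x hh hka (hab.trans hbk), add_sub_add_left_eq_sub, ← sub_smul,
    norm_smul_of_nonneg (by rw [← sub_div]; exact div_nonneg (by linarith) hh.le)]
  ring_nf

theorem norm_pwLinear_sub_rpow_add_le {p : ℝ} (hp : 1 ≤ p) (hh : 0 < h) {k : ℤ} {a b c : ℝ}
    (hka : h * k ≤ a) (hab : a ≤ b) (hbc : b ≤ c) (hck : c ≤ h * k + h) :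
    ‖pwLinear h x c - pwLinear h x b‖ ^ p + ‖pwLinear h x b - pwLinear h x a‖ ^ p ≤
      ‖pwLinear h x c - pwLinear h x a‖ ^ p := by
  have hadd : ‖pwLinear h x c - pwLinear h x b‖ + ‖pwLinear h x b - pwLinear h x a‖ =
      ‖pwLinear h x c - pwLinear h x a‖ := by
    rw [norm_pwLinear_sub_of_mem_cell x hh (hka.trans hab) hbc hck,
      norm_pwLinear_sub_of_mem_cell x hh hka hab (hbc.trans hck),
      norm_pwLinear_sub_of_mem_cell x hh hka (hab.trans hbc) hck]
    ring
  rw [← hadd]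
  exact Real.add_rpow_le_rpow_add (norm_nonneg _) (norm_nonneg _) hp

end Cell

section Holder

variable {d : ℕ} {h p H T : ℝ} {m : ℤ} (x : ℝ → EuclideanSpace ℝ (Fin d))

theorem norm_pwLinear_sub_le_holder_of_mem_cell (hp : 1 ≤ p) (hh : 0 < h) (hT : T = h * m)
    (hx : ∀ a b, 0 ≤ a → a ≤ b → b ≤ T → ‖x b - x a‖ ≤ H * (b - a) ^ (1 / p))
    {k : ℤ} {a b : ℝ} (hk : 0 ≤ h * k) (hka : h * k ≤ a) (hab : a ≤ b)
    (hbk : b ≤ h * k + h) (hbT : b ≤ T) :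
    ‖pwLinear h x b - pwLinear h x a‖ ≤ H * (b - a) ^ (1 / p) := by
  rcases hab.eq_or_lt with rfl | hab
  · simp [Real.zero_rpow (by positivity : p⁻¹ ≠ 0)]
  have hcell : h * k + h ≤ T := hT ▸ mul_intCast_add_le_of_lt hh (by linarith)
  have hW := hx _ _ hk (by linarith) hcell
  rw [add_sub_cancel_left] at hW
  have hc₀ : 0 ≤ (b - a) / h := div_nonneg (by linarith) hh.le
  have hc₁ : (b - a) / h ≤ 1 := by rw [div_le_one hh]; linarith
  calc ‖pwLinear h x b - pwLinear h x a‖ = (b - a) / h * ‖x (h * k + h) - x (h * k)‖ :=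
        norm_pwLinear_sub_of_mem_cell x hh hka hab.le hbk
    _ ≤ (b - a) / h * (H * h ^ (1 / p)) := by gcongr
    _ ≤ ((b - a) / h) ^ (1 / p) * (H * h ^ (1 / p)) := by
        have := (norm_nonneg _).trans hW
        gcongr
        exact Real.self_le_rpow_of_le_one hc₀ hc₁ (div_le_one_of_le₀ hp (by linarith))
    _ = H * (b - a) ^ (1 / p) := by
        rw [Real.div_rpow (by linarith) hh.le]
        field_simp [(Real.rpow_pos_of_pos hh (1 / p)).ne']

theorem norm_pwLinear_sub_le_holder (hp : 1 ≤ p) (hh : 0 < h) (hT : T = h * m) (hH : 0 ≤ H)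
    (hx : ∀ a b, 0 ≤ a → a ≤ b → b ≤ T → ‖x b - x a‖ ≤ H * (b - a) ^ (1 / p))
    {s t : ℝ} (hs : 0 ≤ s) (hst : s ≤ t) (ht : t ≤ T) :
    ‖pwLinear h x t - pwLinear h x s‖ ≤ 3 ^ (1 - 1 / p) * H * (t - s) ^ (1 / p) := by
  obtain ⟨hks, hsk⟩ := mul_floor_le_and_lt_add hh s
  obtain ⟨hlt, htl⟩ := mul_floor_le_and_lt_add hh t
  have hk₀ := mul_floor_div_nonneg hh hs
  have hq₀ : 0 ≤ 1 / p := by positivity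
  have hq₁ : 1 / p ≤ 1 := div_le_one_of_le₀ hp (by linarith)
  rcases (Int.floor_mono (div_le_div_of_nonneg_right hst hh.le)).eq_or_lt with hkl | hkl
  · rw [← hkl] at htl
    calc _ ≤ H * (t - s) ^ (1 / p) := norm_pwLinear_sub_le_holder_of_mem_cell x hp hh hT hx
          hk₀ hks hst htl.le ht
      _ ≤ 3 ^ (1 - 1 / p) * H * (t - s) ^ (1 / p) := by
          rw [mul_assoc]
          exact le_mul_of_one_le_left (by positivity)
            (Real.one_le_rpow (by norm_num) (by linarith))
  have hgrid : h * ⌊s / h⌋ + h ≤ h * ⌊t / h⌋ :=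
    mul_intCast_add_le_of_lt hh (by gcongr)
  have hA := norm_pwLinear_sub_le_holder_of_mem_cell x hp hh hT hx hk₀ hks hsk.le le_rfl
    (by linarith)
  have hB := hx _ _ (by linarith) hgrid (by linarith)
  rw [← pwLinear_mul_intCast_add x hh, ← pwLinear_mul_intCast x hh] at hB
  have hC := norm_pwLinear_sub_le_holder_of_mem_cell x hp hh hT hx (by linarith) le_rfl hlt
    htl.le ht
  calc ‖pwLinear h x t - pwLinear h x s‖
      ≤ ‖pwLinear h x t - pwLinear h x (h * ⌊t / h⌋)‖
        + ‖pwLinear h x (h * ⌊t / h⌋) - pwLinear h x (h * ⌊s / h⌋ + h)‖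
        + ‖pwLinear h x (h * ⌊s / h⌋ + h) - pwLinear h x s‖ :=
        norm_sub_le_norm_sub_add_norm_sub_add_norm_sub _ _ _ _
    _ ≤ H * ((t - h * ⌊t / h⌋) ^ (1 / p) + (h * ⌊t / h⌋ - (h * ⌊s / h⌋ + h)) ^ (1 / p)
        + (h * ⌊s / h⌋ + h - s) ^ (1 / p)) := by linarith
    _ ≤ H * (3 ^ (1 - 1 / p) * (t - s) ^ (1 / p)) := by
        have hsum : t - h * ⌊t / h⌋ + (h * ⌊t / h⌋ - (h * ⌊s / h⌋ + h))
            + (h * ⌊s / h⌋ + h - s) = t - s := by ring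
        rw [← hsum]
        gcongr
        exact rpow_add_rpow_add_rpow_le (by linarith) (by linarith) (by linarith) hq₀ hq₁
    _ = 3 ^ (1 - 1 / p) * H * (t - s) ^ (1 / p) := by ring

end Holder

noncomputable def pwPotential (p h : ℝ) {d : ℕ} (x : ℝ → EuclideanSpace ℝ (Fin d))
    (t : ℝ) : ℝ :=
  pVarPow p 0 (h * ⌊t / h⌋) x + ‖pwLinear h x t - pwLinear h x (h * ⌊t / h⌋)‖ ^ p

section Variation

variable {d : ℕ} {h p T : ℝ} (x : ℝ → EuclideanSpace ℝ (Fin d))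

theorem norm_pwLinear_sub_rpow_le_pwPotential_sub (hp : 1 ≤ p) (hh : 0 < h)
    (hbdd : BddAbove (variationSums p 0 T x)) {s t : ℝ} (hs : 0 ≤ s) (hst : s ≤ t)
    (ht : t ≤ T) :
    ‖pwLinear h x t - pwLinear h x s‖ ^ p ≤
      3 ^ (p - 1) * (pwPotential p h x t - pwPotential p h x s) := by
  obtain ⟨hks, hsk⟩ := mul_floor_le_and_lt_add hh s
  obtain ⟨hlt, htl⟩ := mul_floor_le_and_lt_add hh t
  have hk₀ := mul_floor_div_nonneg hh hs
  have h3 : (1 : ℝ) ≤ 3 ^ (p - 1) := Real.one_le_rpow (by norm_num) (by linarith)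
  unfold pwPotential
  rcases (Int.floor_mono (div_le_div_of_nonneg_right hst hh.le)).eq_or_lt with hkl | hkl
  · rw [← hkl] at htl ⊢
    have hcell := norm_pwLinear_sub_rpow_add_le x hp hh le_rfl hks hst htl.le
    have hΔ : 0 ≤ ‖pwLinear h x t - pwLinear h x s‖ ^ p := by positivity
    exact (le_mul_of_one_le_left (by linarith) h3).trans' (by linarith)
  have hgrid : h * ⌊s / h⌋ + h ≤ h * ⌊t / h⌋ := mul_intCast_add_le_of_lt hh (by gcongr)
  have hA := norm_pwLinear_sub_rpow_add_le x hp hh le_rfl hks hsk.le le_rfl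
  have hω₁ := pVarPow_add_rpow_le hk₀ (le_add_of_nonneg_right hh.le)
    (hbdd.variationSums_of_le (by linarith)) (x := x) (p := p)
  have hω₂ := pVarPow_add_rpow_le (by linarith) hgrid (hbdd.variationSums_of_le (by linarith))
    (x := x) (p := p)
  rw [← pwLinear_mul_intCast_add x hh, ← pwLinear_mul_intCast x hh] at hω₁ hω₂
  calc ‖pwLinear h x t - pwLinear h x s‖ ^ p
      ≤ (‖pwLinear h x t - pwLinear h x (h * ⌊t / h⌋)‖
        + ‖pwLinear h x (h * ⌊t / h⌋) - pwLinear h x (h * ⌊s / h⌋ + h)‖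
        + ‖pwLinear h x (h * ⌊s / h⌋ + h) - pwLinear h x s‖) ^ p := by
        gcongr
        exact norm_sub_le_norm_sub_add_norm_sub_add_norm_sub _ _ _ _
    _ ≤ 3 ^ (p - 1) * (‖pwLinear h x t - pwLinear h x (h * ⌊t / h⌋)‖ ^ p
        + ‖pwLinear h x (h * ⌊t / h⌋) - pwLinear h x (h * ⌊s / h⌋ + h)‖ ^ p
        + ‖pwLinear h x (h * ⌊s / h⌋ + h) - pwLinear h x s‖ ^ p) :=
        add_add_rpow_le (norm_nonneg _) (norm_nonneg _) (norm_nonneg _) hp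
    _ ≤ _ := by gcongr; linarith

theorem sum_norm_pwLinear_sub_rpow_le (hp : 1 ≤ p) (hh : 0 < h) {m : ℤ} (hT : T = h * m)
    (hbdd : BddAbove (variationSums p 0 T x)) {S : ℝ}
    (hS : S ∈ variationSums p 0 T (pwLinear h x)) : S ≤ 3 ^ (p - 1) * pVarPow p 0 T x := by
  obtain ⟨n, u, hu0, hun, hmono, rfl⟩ := hS
  have hu := monotoneOn_Iic_of_le_succ hmono
  have hmem : ∀ i ≤ n, 0 ≤ u i ∧ u i ≤ T := fun i hi =>
    ⟨hu0 ▸ hu (by simp) hi (Nat.zero_le i), hun ▸ hu hi (by simp) hi⟩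
  have hfloor : ⌊T / h⌋ = m := by rw [hT, mul_div_cancel_left₀ _ hh.ne', Int.floor_intCast]
  have hΦT : pwPotential p h x T = pVarPow p 0 T x := by
    simp [pwPotential, hfloor, ← hT, Real.zero_rpow (by linarith : p ≠ 0)]
  calc ∑ i ∈ range n, ‖pwLinear h x (u (i + 1)) - pwLinear h x (u i)‖ ^ p
      ≤ ∑ i ∈ range n, 3 ^ (p - 1) *
          (pwPotential p h x (u (i + 1)) - pwPotential p h x (u i)) := by
        refine sum_le_sum fun i hi => ?_
        have hi := mem_range.mp hi
        exact norm_pwLinear_sub_rpow_le_pwPotential_sub x hp hh hbdd (hmem i hi.le).1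
          (hmono i hi) (hmem (i + 1) hi).2
    _ = 3 ^ (p - 1) * (pwPotential p h x T - pwPotential p h x 0) := by
        rw [← mul_sum, sum_range_sub (fun i => pwPotential p h x (u i)), hun, hu0]
    _ ≤ 3 ^ (p - 1) * pVarPow p 0 T x := by
        have : 0 ≤ pwPotential p h x 0 := add_nonneg pVarPow_nonneg (by positivity)
        rw [hΦT]
        gcongr
        linarith

end Variation

theorem pwLinear_norm_bounds_general (d : ℕ) (p T h : ℝ) (hp : 1 ≤ p)
    (hh : 0 < h) (hgrid : ∃ n : ℕ, T = n * h)
    (x : ℝ → EuclideanSpace ℝ (Fin d))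
    (hpvar : BddAbove {r | ∃ n : ℕ, ∃ u : ℕ → ℝ, u 0 = 0 ∧ u n = T ∧
      (∀ i < n, u i ≤ u (i + 1)) ∧
      r = (∑ i ∈ range n, ‖x (u (i + 1)) - x (u i)‖ ^ p) ^ (1 / p)})
    (hhol : BddAbove {r | ∃ u v : ℝ, 0 ≤ u ∧ u < v ∧ v ≤ T ∧
      r = ‖x v - x u‖ / (v - u) ^ (1 / p)}) :
    pVarNorm p 0 T (pwLinear h x) ≤ 3 ^ (1 - 1 / p) * pVarNorm p 0 T x ∧
    holNorm p 0 T (pwLinear h x) ≤ 3 ^ (1 - 1 / p) * holNorm p 0 T x := by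
  obtain ⟨n, hn⟩ := hgrid
  have hT : T = h * (n : ℤ) := by rw [hn, Int.cast_natCast, mul_comm]
  have hp₀ : 0 < p := by linarith
  have hV : 0 ≤ pVarNorm p 0 T x := pVarNorm_nonneg
  have hle : ∀ S ∈ variationSums p 0 T x, S ≤ pVarNorm p 0 T x ^ p :=
    fun _ => le_pVarNorm_rpow_of_mem_variationSums hp₀ hpvar
  constructor
  · refine pVarNorm_le_of_forall_variationSums_le hp₀ (by positivity) fun S hS => ?_
    calc S ≤ 3 ^ (p - 1) * pVarPow p 0 T x :=
          sum_norm_pwLinear_sub_rpow_le x hp hh hT ⟨_, hle⟩ hS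
      _ ≤ 3 ^ (p - 1) * pVarNorm p 0 T x ^ p := by
          gcongr
          exact Real.sSup_le hle (by positivity)
      _ = (3 ^ (1 - 1 / p) * pVarNorm p 0 T x) ^ p := by
          rw [Real.mul_rpow (by positivity) hV, ← Real.rpow_mul (by norm_num)]
          congr 2
          field_simp
  · refine holNorm_le_of_forall_le (mul_nonneg (by positivity) holNorm_nonneg)
      fun a b ha hab hb => ?_
    exact norm_pwLinear_sub_le_holder x hp hh hT holNorm_nonneg
      (fun _ _ => norm_sub_le_holNorm_mul hp₀.ne' hhol) ha hab.le hb

/-- Piecewise linear approximation does not increase the `p`-variation and the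
`1/p`-Hölder seminorms by more than the factor `3^{1−1/p}`. -/
theorem pwLinear_norm_bounds (d : ℕ) (p T h : ℝ) (hp : 1 ≤ p) (hT : 0 < T)
    (hh : 0 < h) (hgrid : ∃ n : ℕ, T = n * h)
    (x : ℝ → EuclideanSpace ℝ (Fin d)) (hx : Continuous x)
    (hpvar : BddAbove {r | ∃ n : ℕ, ∃ u : ℕ → ℝ, u 0 = 0 ∧ u n = T ∧
      (∀ i < n, u i ≤ u (i + 1)) ∧
      r = (∑ i ∈ range n, ‖x (u (i + 1)) - x (u i)‖ ^ p) ^ (1 / p)})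
    (hhol : BddAbove {r | ∃ u v : ℝ, 0 ≤ u ∧ u < v ∧ v ≤ T ∧
      r = ‖x v - x u‖ / (v - u) ^ (1 / p)}) :
    pVarNorm p 0 T (pwLinear h x) ≤ 3 ^ (1 - 1 / p) * pVarNorm p 0 T x ∧
    holNorm p 0 T (pwLinear h x) ≤ 3 ^ (1 - 1 / p) * holNorm p 0 T x :=
  pwLinear_norm_bounds_general d p T h hp hh hgrid x hpvar hhol
end

section
/- Let a, q, c > 0, M > 1, p ∈ ℝ with p + qL > 0 for L large, and consider the equation M^{cL} / (p + qL) = ε^{-2} for the unknown L = L(ε) as ε ↓ 0. Then L(ε) = y/(c log M) + log(p + qy/(c log M))/(c log M) + O(log y / y) as y := log ε^{-2} → ∞. In particular, L(ε) = (log ε^{-1})·2/(c log M) + O(log log ε^{-1}). -/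
open Real Filter Set Asymptotics Topology

/-!
Taking logarithms, with `m = c log M`, the equation becomes `φ L = y` for
`φ L = m L - log (p + q L)` (`logRatio` below) and `y = log ε⁻²`. Once `p + q L ≥ 2q/m`, the
logarithm grows at most half as fast as `m L`, so `φ` grows at least linearly and the
intermediate value theorem gives a solution `L ≥ y/m` with `p + q L = O(y)`. Then
`L - y/m = log (p + q L) / m = O(log y)`, and comparing `log (p + q L)` with `log (p + q y/m)`
via `log a - log b ≤ (a - b)/b` costs `q (L - y/m) / (p + q y/m) = O(log y / y)`.
-/

lemma Real.log_sub_log_le_div {a b : ℝ} (hb : 0 < b) (hab : b ≤ a) :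
    log a - log b ≤ (a - b) / b := by
  rw [← log_div (hb.trans_le hab).ne' hb.ne', sub_div, div_self hb.ne']
  exact log_le_sub_one_of_pos (div_pos (hb.trans_le hab) hb)

lemma eventually_add_mul_le_sq (A B : ℝ) : ∀ᶠ y in atTop, A + B * y ≤ y ^ 2 := by
  filter_upwards [eventually_ge_atTop (|A| + |B| + 1)] with y hy
  nlinarith [le_abs_self A, le_abs_self B, abs_nonneg A, abs_nonneg B]

noncomputable def logRatio (m q p L : ℝ) : ℝ := m * L - log (p + q * L)

section LogRatio

variable {m q p : ℝ}

lemma logRatio_sub_logRatio_ge (hm : 0 < m) (hq : 0 < q) {x z : ℝ}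
    (hx : 2 * q / m ≤ p + q * x) (hxz : x ≤ z) :
    m / 2 * (z - x) ≤ logRatio m q p z - logRatio m q p x := by
  have hpx : 0 < p + q * x := (by positivity : 0 < 2 * q / m).trans_le hx
  have hlog : log (p + q * z) - log (p + q * x) ≤ q * (z - x) / (p + q * x) :=
    (Real.log_sub_log_le_div hpx (by nlinarith)).trans_eq (by ring)
  have hslope : q * (z - x) / (p + q * x) ≤ m / 2 * (z - x) := by
    rw [div_le_iff₀ hpx]
    nlinarith [mul_le_mul_of_nonneg_left hx (by positivity : 0 ≤ m / 2 * (z - x)),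
      mul_div_cancel₀ (2 * q) hm.ne']
  unfold logRatio
  linarith

lemma exists_logRatio_eq (hm : 0 < m) (hq : 0 < q) {x y : ℝ}
    (hx : 2 * q / m ≤ p + q * x) (hy : logRatio m q p x ≤ y) :
    ∃ L ∈ Icc x (x + 2 * (y - logRatio m q p x) / m), logRatio m q p L = y := by
  set B := x + 2 * (y - logRatio m q p x) / m
  have hxB : x ≤ B := le_add_of_nonneg_right (div_nonneg (by linarith) hm.le)
  have hyB : y ≤ logRatio m q p B := by
    have := logRatio_sub_logRatio_ge hm hq hx hxB
    have hB : m / 2 * (B - x) = y - logRatio m q p x := by simp only [B]; field_simp; ring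
    linarith
  have hpos : ∀ t ∈ Icc x B, 0 < p + q * t := fun t ht =>
    (by positivity : 0 < 2 * q / m).trans_le (hx.trans (by nlinarith [ht.1]))
  have hcont : ContinuousOn (logRatio m q p) (Icc x B) :=
    (continuousOn_const.mul continuousOn_id).sub
      (ContinuousOn.log (by fun_prop) fun t ht => (hpos t ht).ne')
  exact intermediate_value_Icc hxB hcont ⟨hy, hyB⟩

lemma exists_logRatio_rightInverse (hm : 0 < m) (hq : 0 < q) :
    ∃ Λ : ℝ → ℝ, ∀ᶠ y in atTop, logRatio m q p (Λ y) = y ∧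
      1 ≤ p + q * Λ y ∧ p + q * Λ y ≤ y ^ 2 := by
  obtain ⟨x, hx⟩ : ∃ x, max 1 (2 * q / m) ≤ p + q * x :=
    ⟨(max 1 (2 * q / m) - p) / q, by field_simp; linarith⟩
  have hsol : ∀ y, ∃ L, logRatio m q p x ≤ y →
      L ∈ Icc x (x + 2 * (y - logRatio m q p x) / m) ∧ logRatio m q p L = y := by
    intro y
    by_cases hy : logRatio m q p x ≤ y
    · obtain ⟨L, hL, hLy⟩ := exists_logRatio_eq hm hq (le_of_max_le_right hx) hy
      exact ⟨L, fun _ => ⟨hL, hLy⟩⟩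
    · exact ⟨0, fun h => absurd h hy⟩
  choose Λ hΛ using hsol
  refine ⟨Λ, ?_⟩
  filter_upwards [eventually_ge_atTop (logRatio m q p x),
    eventually_add_mul_le_sq (p + q * x - 2 * q * logRatio m q p x / m) (2 * q / m)]
    with y hy hsq
  obtain ⟨⟨hxL, hLB⟩, hLy⟩ := hΛ y hy
  refine ⟨hLy, (le_max_left _ _).trans (hx.trans (by nlinarith)), ?_⟩
  calc p + q * Λ y ≤ p + q * (x + 2 * (y - logRatio m q p x) / m) := by gcongr
    _ = p + q * x - 2 * q * logRatio m q p x / m + 2 * q / m * y := by ring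
    _ ≤ y ^ 2 := hsq

lemma sub_div_eq_of_logRatio_eq (hm : 0 < m) {L y : ℝ} (hL : logRatio m q p L = y) :
    L - y / m = log (p + q * L) / m := by
  rw [← hL, logRatio]; field_simp; ring

lemma sub_div_mem_Icc_of_logRatio_eq (hm : 0 < m) {L y : ℝ} (hL : logRatio m q p L = y)
    (h1 : 1 ≤ p + q * L) (hsq : p + q * L ≤ y ^ 2) :
    L - y / m ∈ Icc 0 (2 / m * log y) := by
  rw [sub_div_eq_of_logRatio_eq hm hL, div_mul_eq_mul_div,
    show 2 * log y = log (y ^ 2) by rw [log_pow]; norm_num]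
  exact ⟨div_nonneg (log_nonneg h1) hm.le,
    div_le_div_of_nonneg_right (log_le_log (by linarith) hsq) hm.le⟩

lemma sub_add_log_div_mem_Icc_of_logRatio_eq (hm : 0 < m) (hq : 0 < q) {L y : ℝ}
    (hL : logRatio m q p L = y) (hLy : L - y / m ∈ Icc 0 (2 / m * log y))
    (hy : 0 < y) (hpy : 0 ≤ p + q * y / (2 * m)) :
    L - (y / m + log (p + q * y / m) / m) ∈ Icc 0 (4 / m * (log y / y)) := by
  have hhalf : q * y / (2 * m) ≤ p + q * y / m := by
    have : q * y / m = q * y / (2 * m) + q * y / (2 * m) := by field_simp; ring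
    linarith
  have hden : 0 < p + q * y / m := (by positivity : 0 < q * y / (2 * m)).trans_le hhalf
  have hle : p + q * y / m ≤ p + q * L := by
    have : q * y / m ≤ q * L := by rw [mul_div_assoc]; nlinarith [hLy.1]
    linarith
  have hgap : L - (y / m + log (p + q * y / m) / m)
      = (log (p + q * L) - log (p + q * y / m)) / m := by
    rw [sub_div, ← sub_div_eq_of_logRatio_eq hm hL]; ring
  rw [hgap]
  refine ⟨div_nonneg (sub_nonneg.2 (log_le_log hden hle)) hm.le, ?_⟩
  calc (log (p + q * L) - log (p + q * y / m)) / m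
      ≤ (q * (L - y / m) / (p + q * y / m)) / m := by
        gcongr
        exact (Real.log_sub_log_le_div hden hle).trans_eq (by ring)
    _ ≤ (q * (2 / m * log y) / (q * y / (2 * m))) / m := by
        gcongr
        · exact mul_nonneg hq.le (le_trans hLy.1 hLy.2)
        · exact hLy.2
    _ = 4 / m * (log y / y) := by field_simp; ring

lemma exists_logRatio_rightInverse_expansion (hm : 0 < m) (hq : 0 < q) :
    ∃ Λ : ℝ → ℝ, ∀ᶠ y in atTop, logRatio m q p (Λ y) = y ∧ 1 ≤ p + q * Λ y ∧
      Λ y - y / m ∈ Icc 0 (2 / m * log y) ∧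
      Λ y - (y / m + log (p + q * y / m) / m) ∈ Icc 0 (4 / m * (log y / y)) := by
  obtain ⟨Λ, hΛ⟩ := exists_logRatio_rightInverse (p := p) hm hq
  have hpy : ∀ᶠ y in atTop, 0 ≤ p + q * y / (2 * m) :=
    (tendsto_atTop_add_const_left _ p ((tendsto_id.const_mul_atTop hq).atTop_div_const
      (by positivity))).eventually_ge_atTop 0
  refine ⟨Λ, ?_⟩
  filter_upwards [hΛ, hpy, eventually_gt_atTop 0] with y ⟨hLy, h1, hsq⟩ hpy hy
  have hfirst := sub_div_mem_Icc_of_logRatio_eq hm hLy h1 hsq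
  exact ⟨hLy, h1, hfirst, sub_add_log_div_mem_Icc_of_logRatio_eq hm hq hLy hfirst hy hpy⟩

end LogRatio

lemma tendsto_log_rpow_neg_two :
    Tendsto (fun ε : ℝ => log (ε ^ (-2 : ℝ))) (𝓝[>] 0) atTop := by
  refine (tendsto_log_nhdsGT_zero.const_mul_atBot_of_neg (by norm_num : (-2 : ℝ) < 0)).congr' ?_
  filter_upwards [self_mem_nhdsWithin] with ε (hε : 0 < ε)
  rw [log_rpow hε]

lemma log_rpow_neg_two {ε : ℝ} (hε : 0 < ε) : log (ε ^ (-2 : ℝ)) = 2 * log ε⁻¹ := by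
  rw [log_rpow hε, log_inv]; ring

lemma isBigO_log_log_div_two : log =O[atTop] fun y => log (y / 2) := by
  refine IsBigO.of_bound 2 ?_
  filter_upwards [eventually_ge_atTop 4] with y hy
  have hhalf : log 2 ≤ log (y / 2) := log_le_log two_pos (by linarith)
  have hdiv : log (y / 2) = log y - log 2 := log_div (by positivity) two_ne_zero
  rw [norm_of_nonneg (log_nonneg (by linarith)), norm_of_nonneg (by linarith [log_pos one_lt_two])]
  linarith

lemma Asymptotics.isBigO_of_eventually_mem_Icc {α : Type*} {l : Filter α} {f g : α → ℝ}
    (C : ℝ) (h : ∀ᶠ x in l, f x ∈ Icc 0 (C * g x)) : f =O[l] g := by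
  refine IsBigO.of_bound |C| ?_
  filter_upwards [h] with x hx
  rw [norm_of_nonneg hx.1, norm_eq_abs, ← abs_mul]
  exact hx.2.trans (le_abs_self _)

lemma rpow_mul_div_eq_exp_logRatio {c M q p L : ℝ} (hM : 0 < M) (hL : 0 < p + q * L) :
    M ^ (c * L) / (p + q * L) = exp (logRatio (c * log M) q p L) := by
  rw [logRatio, exp_sub, exp_log hL, rpow_def_of_pos hM]
  ring_nf

theorem optimal_level_asymptotics_general (q c p M : ℝ)
    (hq : 0 < q) (hc : 0 < c) (hM : 1 < M) :
    ∃ L : ℝ → ℝ,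
      (∀ᶠ ε in nhdsWithin 0 (Ioi (0 : ℝ)),
        M ^ (c * L ε) / (p + q * L ε) = ε ^ (-2 : ℝ)) ∧
      (fun ε => L ε - (log (ε ^ (-2 : ℝ)) / (c * log M) +
          log (p + q * log (ε ^ (-2 : ℝ)) / (c * log M)) / (c * log M)))
        =O[nhdsWithin 0 (Ioi (0 : ℝ))]
        (fun ε => log (log (ε ^ (-2 : ℝ))) / log (ε ^ (-2 : ℝ))) ∧
      (fun ε => L ε - 2 * log ε⁻¹ / (c * log M))
        =O[nhdsWithin 0 (Ioi (0 : ℝ))] (fun ε => log (log ε⁻¹)) := by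
  set m := c * log M
  have hm : 0 < m := mul_pos hc (log_pos hM)
  obtain ⟨Λ, hΛ⟩ := exists_logRatio_rightInverse_expansion (p := p) hm hq
  have hy := tendsto_log_rpow_neg_two
  refine ⟨fun ε => Λ (log (ε ^ (-2 : ℝ))), ?_, ?_, ?_⟩
  · filter_upwards [hy.eventually hΛ, self_mem_nhdsWithin]
      with ε ⟨hLy, h1, _, _⟩ (hε : 0 < ε)
    rw [rpow_mul_div_eq_exp_logRatio (zero_lt_one.trans hM) (by linarith), hLy,
      exp_log (rpow_pos_of_pos hε _)]
  · exact (isBigO_of_eventually_mem_Icc _ (hΛ.mono fun y h => h.2.2.2)).comp_tendsto hy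
  · have hfirst : (fun y => Λ y - y / m) =O[atTop] fun y => log (y / 2) :=
      (isBigO_of_eventually_mem_Icc _ (hΛ.mono fun y h => h.2.2.1)).trans isBigO_log_log_div_two
    refine (hfirst.comp_tendsto hy).congr' ?_ ?_ <;>
      filter_upwards [self_mem_nhdsWithin] with ε (hε : 0 < ε)
    · simp only [Function.comp_apply, log_rpow_neg_two hε]
    · simp only [Function.comp_apply, log_rpow_neg_two hε,
        mul_div_cancel_left₀ _ (two_ne_zero : (2 : ℝ) ≠ 0)]

/-- Asymptotic expansion of the optimal number of levels `L(ε)` solving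
`M^{cL}/(p+qL) = ε^{-2}` as `ε ↓ 0`: with `y = log ε^{-2}`,
`L(ε) = y/(c log M) + log(p + q y/(c log M))/(c log M) + O(log y / y)`; in
particular `L(ε) = 2 log ε^{-1}/(c log M) + O(log log ε^{-1})`. -/
theorem optimal_level_asymptotics (a q c p M : ℝ)
    (ha : 0 < a) (hq : 0 < q) (hc : 0 < c) (hM : 1 < M) :
    ∃ L : ℝ → ℝ,
      (∀ᶠ ε in nhdsWithin 0 (Ioi (0 : ℝ)),
        M ^ (c * L ε) / (p + q * L ε) = ε ^ (-2 : ℝ)) ∧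
      (fun ε => L ε - (log (ε ^ (-2 : ℝ)) / (c * log M) +
          log (p + q * log (ε ^ (-2 : ℝ)) / (c * log M)) / (c * log M)))
        =O[nhdsWithin 0 (Ioi (0 : ℝ))]
        (fun ε => log (log (ε ^ (-2 : ℝ))) / log (ε ^ (-2 : ℝ))) ∧
      (fun ε => L ε - 2 * log ε⁻¹ / (c * log M))
        =O[nhdsWithin 0 (Ioi (0 : ℝ))] (fun ε => log (log ε⁻¹)) :=
  optimal_level_asymptotics_general q c p M hq hc hM
end
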